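/- Fix σ ∈ (0,1) and let α_n = 1/(n+1)^σ. Fix λ > 0. Then Σ_{i=0}^n exp(-(λ/2) Σ_{k=i+1}^n α_k) · α_i ≤ (2 e^{λ/2})/λ for all n ≥ 0. -/

import Mathlib

lemma key_ineq (lam a : ℝ) (hlam : 0 < lam) (ha0 : 0 < a) (ha1 : a ≤ 1) :
    a ≤ (2 * Real.exp (lam / 2) / lam) * (1 - Real.exp (-(lam / 2) * a)) := by
  set x := lam / 2 * a with hx
  have hx0 : 0 < x := by positivity
  have hxle : x ≤ lam / 2 := by nlinarith
  have h1 : x + 1 ≤ Real.exp x := Real.add_one_le_exp x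
  have h2 : Real.exp x ≤ Real.exp (lam / 2) := Real.exp_le_exp.mpr hxle
  have h3 : Real.exp (-(lam / 2) * a) = 1 / Real.exp x := by
    rw [one_div, ← Real.exp_neg, hx]; ring_nf
  rw [h3]
  have hex : 0 < Real.exp x := Real.exp_pos x
  rw [div_mul_eq_mul_div, le_div_iff₀ hlam]
  have h4 : 1 - 1 / Real.exp x = (Real.exp x - 1) / Real.exp x := by
    field_simp
  rw [h4, ← mul_div_assoc, le_div_iff₀ hex]
  -- goal: a * lam * exp x ≤ 2 * exp(lam/2) * (exp x - 1)
  have hax : a * lam = 2 * x := by rw [hx]; ring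
  nlinarith [mul_le_mul_of_nonneg_left h2 (by nlinarith : (0:ℝ) ≤ Real.exp x - 1 - 0),
    mul_pos hex hx0]

theorem stmt4 (σ lam : ℝ) (hσ0 : 0 < σ) (hσ1 : σ < 1) (hlam : 0 < lam)
    (α : ℕ → ℝ) (hα : ∀ n : ℕ, α n = 1 / ((n : ℝ) + 1) ^ σ) :
    ∀ n : ℕ, ∑ i ∈ Finset.range (n + 1),
        Real.exp (-(lam / 2) * ∑ k ∈ Finset.Icc (i + 1) n, α k) * α i ≤
      2 * Real.exp (lam / 2) / lam := by
  have hαpos : ∀ i : ℕ, 0 < α i := by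
    intro i; rw [hα]
    positivity
  have hαle : ∀ i : ℕ, α i ≤ 1 := by
    intro i; rw [hα]
    have h1 : (1:ℝ) ≤ ((i : ℝ) + 1) ^ σ :=
      Real.one_le_rpow (by exact_mod_cast Nat.le_add_left 1 i) hσ0.le
    rw [div_le_one (by positivity)]
    exact h1
  intro n
  set C := 2 * Real.exp (lam / 2) / lam with hC
  have hCpos : 0 < C := by positivity
  set t : ℕ → ℝ := fun m => ∑ k ∈ Finset.range m, α k with ht
  set g : ℕ → ℝ := fun i => Real.exp (-(lam / 2) * (t (n + 1) - t i)) with hg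
  have hterm : ∀ i ∈ Finset.range (n + 1),
      Real.exp (-(lam / 2) * ∑ k ∈ Finset.Icc (i + 1) n, α k) * α i
        ≤ C * (g (i + 1) - g i) := by
    intro i hi
    have hin : i ≤ n := Nat.lt_succ_iff.mp (Finset.mem_range.mp hi)
    have hsum : ∑ k ∈ Finset.Icc (i + 1) n, α k = t (n + 1) - t (i + 1) := by
      rw [← Finset.Ico_add_one_right_eq_Icc, Finset.sum_Ico_eq_sub _ (Nat.add_le_add_right hin 1)]
    have hti : t (i + 1) = t i + α i := Finset.sum_range_succ α i
    have hgi : g i = g (i + 1) * Real.exp (-(lam / 2) * α i) := by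
      rw [hg]
      simp only
      rw [← Real.exp_add, hti]
      ring_nf
    have hgpos : 0 < g (i + 1) := Real.exp_pos _
    rw [hsum]
    have : Real.exp (-(lam / 2) * (t (n + 1) - t (i + 1))) = g (i + 1) := rfl
    rw [this, hgi]
    have := key_ineq lam (α i) hlam (hαpos i) (hαle i)
    calc g (i + 1) * α i ≤ g (i + 1) * (C * (1 - Real.exp (-(lam / 2) * α i))) :=
          mul_le_mul_of_nonneg_left this hgpos.le
      _ = C * (g (i + 1) - g (i + 1) * Real.exp (-(lam / 2) * α i)) := by ring
  calc ∑ i ∈ Finset.range (n + 1),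
        Real.exp (-(lam / 2) * ∑ k ∈ Finset.Icc (i + 1) n, α k) * α i
      ≤ ∑ i ∈ Finset.range (n + 1), C * (g (i + 1) - g i) :=
        Finset.sum_le_sum hterm
    _ = C * (g (n + 1) - g 0) := by
        rw [← Finset.mul_sum, Finset.sum_range_sub]
    _ ≤ C * 1 := by
        apply mul_le_mul_of_nonneg_left _ hCpos.le
        have h1 : g (n + 1) ≤ 1 := by
          rw [hg]; simp only [sub_self, mul_zero, Real.exp_zero]; exact le_refl 1
        have h0 : 0 ≤ g 0 := (Real.exp_pos _).le
        linarith
    _ = C := mul_one C
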